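/- arXiv:2603.16752 — 2 statements merged into one kernel-verified Lean document; each statement's English description precedes it below -/
import Mathlib

section
/- Let V ⊆ ℝ^N be a finite nonempty set of scenarios and let U = convexHull ℝ V be the polyhedral uncertainty set with vertex set contained in V. Let B ∈ ℝ^{q×d}, b ∈ ℝ^q, c ∈ ℝ^d, and suppose the first-stage feasible set X = {x ∈ ℝ^d : B x ≤ b componentwise} is nonempty. Then the two-stage adaptive robust problem and its deployment-scenario reformulation have equal optimal values: inf_{x ∈ X} ( c ⬝ x + sup_{ξ ∈ U} Q̂(x, ξ) ) = inf_{x ∈ X} ( c ⬝ x + sup_{ξ ∈ V} Q̂(x, ξ) ). -/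
/-!
For fixed `x`, the recourse cost `Q̂(x, ·)` is convex: it is the optimal value of a linear
program whose right-hand side `E ξ + h` depends affinely on `ξ`, so convex combinations of
feasible recourses are feasible for the combined scenario. By the maximum principle every value
of a convex function on `convexHull ℝ V` is dominated by a value on `V`, so the inner suprema
agree for every `x`, and with them the outer infima.
-/

open Matrix

/-- Second-stage (recourse) value function:
`Q̂(x, ξ) = inf { c_viol ⬝ s : p, s, s ≥ 0, H x + D p − s ≤ E ξ + h }`. -/
noncomputable def Qhat {d g m N : ℕ} (H : Matrix (Fin m) (Fin d) ℝ)
    (D : Matrix (Fin m) (Fin g) ℝ) (E : Matrix (Fin m) (Fin N) ℝ)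
    (h : Fin m → ℝ) (cviol : Fin m → ℝ) (x : Fin d → ℝ) (ξ : Fin N → ℝ) : ℝ :=
  sInf { v : ℝ | ∃ (p : Fin g → ℝ) (s : Fin m → ℝ),
    (∀ i, 0 ≤ s i) ∧
    (∀ i, (H.mulVec x + D.mulVec p - s) i ≤ (E.mulVec ξ + h) i) ∧
    v = cviol ⬝ᵥ s }

open scoped Pointwise

lemma ConvexOn.sSup_image_convexHull {𝕜 E β : Type*} [Field 𝕜] [LinearOrder 𝕜]
    [IsStrictOrderedRing 𝕜] [AddCommGroup E] [Module 𝕜 E]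
    [ConditionallyCompleteLinearOrder β] [AddCommGroup β] [IsOrderedAddMonoid β] [Module 𝕜 β]
    [IsStrictOrderedModule 𝕜 β] {s t : Set E} {f : E → β} (hf : ConvexOn 𝕜 s f) (hts : t ⊆ s) :
    sSup (f '' convexHull 𝕜 t) = sSup (f '' t) := by
  refine csSup_eq_csSup_of_forall_exists_le ?_ ?_
  · rintro _ ⟨x, hx, rfl⟩
    obtain ⟨y, hy, hxy⟩ := hf.exists_ge_of_mem_convexHull hts hx
    exact ⟨f y, Set.mem_image_of_mem f hy, hxy⟩
  · rintro _ ⟨y, hy, rfl⟩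
    exact ⟨f y, Set.mem_image_of_mem f (subset_convexHull 𝕜 t hy), le_rfl⟩

section Recourse

variable {d g m N : ℕ} (H : Matrix (Fin m) (Fin d) ℝ) (D : Matrix (Fin m) (Fin g) ℝ)
  (E : Matrix (Fin m) (Fin N) ℝ) (h : Fin m → ℝ) (cviol : Fin m → ℝ)

def recourseCosts (x : Fin d → ℝ) (ξ : Fin N → ℝ) : Set ℝ :=
  { v : ℝ | ∃ (p : Fin g → ℝ) (s : Fin m → ℝ),
    (∀ i, 0 ≤ s i) ∧
    (∀ i, (H.mulVec x + D.mulVec p - s) i ≤ (E.mulVec ξ + h) i) ∧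
    v = cviol ⬝ᵥ s }

lemma Qhat_eq_sInf_recourseCosts (x : Fin d → ℝ) (ξ : Fin N → ℝ) :
    Qhat H D E h cviol x ξ = sInf (recourseCosts H D E h cviol x ξ) := rfl

lemma recourseCosts_nonempty (x : Fin d → ℝ) (ξ : Fin N → ℝ) :
    (recourseCosts H D E h cviol x ξ).Nonempty := by
  set s : Fin m → ℝ := fun i => max 0 ((H *ᵥ x - E *ᵥ ξ - h) i)
  refine ⟨cviol ⬝ᵥ s, 0, s, fun i => le_max_left _ _, fun i => ?_, rfl⟩
  have hs : (H *ᵥ x - E *ᵥ ξ - h) i ≤ s i := le_max_right _ _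
  simp only [Pi.add_apply, Pi.sub_apply, mulVec_zero, Pi.zero_apply] at hs ⊢
  linarith

lemma recourseCosts_bddBelow (hcviol : ∀ i, 0 ≤ cviol i) (x : Fin d → ℝ) (ξ : Fin N → ℝ) :
    BddBelow (recourseCosts H D E h cviol x ξ) := by
  refine ⟨0, ?_⟩
  rintro _ ⟨p, s, hs, -, rfl⟩
  exact Finset.sum_nonneg fun i _ => mul_nonneg (hcviol i) (hs i)

lemma smul_recourseCosts_add_smul_recourseCosts_subset (x : Fin d → ℝ) (ξ₁ ξ₂ : Fin N → ℝ)
    {a b : ℝ} (ha : 0 ≤ a) (hb : 0 ≤ b) (hab : a + b = 1) :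
    a • recourseCosts H D E h cviol x ξ₁ + b • recourseCosts H D E h cviol x ξ₂ ⊆
      recourseCosts H D E h cviol x (a • ξ₁ + b • ξ₂) := by
  rintro _ ⟨_, ⟨_, ⟨p₁, s₁, hs₁, hc₁, rfl⟩, rfl⟩, _, ⟨_, ⟨p₂, s₂, hs₂, hc₂, rfl⟩, rfl⟩, rfl⟩
  refine ⟨a • p₁ + b • p₂, a • s₁ + b • s₂,
    fun i => add_nonneg (mul_nonneg ha (hs₁ i)) (mul_nonneg hb (hs₂ i)), fun i => ?_, ?_⟩
  · have h₁ := hc₁ i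
    have h₂ := hc₂ i
    simp only [Pi.add_apply, Pi.sub_apply, Pi.smul_apply, smul_eq_mul, mulVec_add,
      mulVec_smul] at h₁ h₂ ⊢
    linear_combination a * h₁ + b * h₂ + (h i - (H *ᵥ x) i) * hab
  · simp only [dotProduct_add, dotProduct_smul, smul_eq_mul]

lemma convexOn_Qhat (hcviol : ∀ i, 0 ≤ cviol i) (x : Fin d → ℝ) :
    ConvexOn ℝ Set.univ (Qhat H D E h cviol x) := by
  refine ⟨convex_univ, fun ξ₁ _ ξ₂ _ a b ha hb hab => ?_⟩
  set S := recourseCosts H D E h cviol x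
  have hne : ∀ ξ, (S ξ).Nonempty := recourseCosts_nonempty H D E h cviol x
  have hbdd : ∀ ξ, BddBelow (S ξ) := recourseCosts_bddBelow H D E h cviol hcviol x
  simp only [Qhat_eq_sInf_recourseCosts, smul_eq_mul]
  calc sInf (S (a • ξ₁ + b • ξ₂))
      ≤ sInf (a • S ξ₁ + b • S ξ₂) :=
        csInf_le_csInf (hbdd _) ((hne ξ₁).smul_set.add (hne ξ₂).smul_set)
          (smul_recourseCosts_add_smul_recourseCosts_subset H D E h cviol x ξ₁ ξ₂ ha hb hab)
    _ = a * sInf (S ξ₁) + b * sInf (S ξ₂) := by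
        rw [csInf_add (hne ξ₁).smul_set ((hbdd ξ₁).smul_of_nonneg ha) (hne ξ₂).smul_set
          ((hbdd ξ₂).smul_of_nonneg hb), Real.sInf_smul_of_nonneg ha,
          Real.sInf_smul_of_nonneg hb, smul_eq_mul, smul_eq_mul]

end Recourse

theorem aro_deployment_scenario_equivalence_general
    {d g m N : ℕ}
    (H : Matrix (Fin m) (Fin d) ℝ) (D : Matrix (Fin m) (Fin g) ℝ)
    (E : Matrix (Fin m) (Fin N) ℝ) (h : Fin m → ℝ) (cviol : Fin m → ℝ)
    (hcviol : ∀ i, 0 ≤ cviol i)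
    (c : Fin d → ℝ)
    (V : Set (Fin N → ℝ))
    (X : Set (Fin d → ℝ)) :
    sInf ((fun x => c ⬝ᵥ x +
        sSup ((fun ξ => Qhat H D E h cviol x ξ) '' (convexHull ℝ V))) '' X) =
    sInf ((fun x => c ⬝ᵥ x +
        sSup ((fun ξ => Qhat H D E h cviol x ξ) '' V)) '' X) := by
  congr 1
  refine Set.image_congr fun x _ => ?_
  rw [(convexOn_Qhat H D E h cviol hcviol x).sSup_image_convexHull (Set.subset_univ V)]

/-- The two-stage adaptive robust problem over the polyhedral uncertainty set
`U = convexHull ℝ V` has the same optimal value as its deployment-scenario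
reformulation over the vertex set `V`. -/
theorem aro_deployment_scenario_equivalence
    {d g m N q : ℕ}
    (H : Matrix (Fin m) (Fin d) ℝ) (D : Matrix (Fin m) (Fin g) ℝ)
    (E : Matrix (Fin m) (Fin N) ℝ) (h : Fin m → ℝ) (cviol : Fin m → ℝ)
    (hcviol : ∀ i, 0 ≤ cviol i)
    (B : Matrix (Fin q) (Fin d) ℝ) (b : Fin q → ℝ) (c : Fin d → ℝ)
    (V : Set (Fin N → ℝ)) (hVfin : V.Finite) (hVne : V.Nonempty)
    (X : Set (Fin d → ℝ)) (hX : X = { x | ∀ i, B.mulVec x i ≤ b i })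
    (hXne : X.Nonempty) :
    sInf ((fun x => c ⬝ᵥ x +
        sSup ((fun ξ => Qhat H D E h cviol x ξ) '' (convexHull ℝ V))) '' X) =
    sInf ((fun x => c ⬝ᵥ x +
        sSup ((fun ξ => Qhat H D E h cviol x ξ) '' V)) '' X) :=
  aro_deployment_scenario_equivalence_general H D E h cviol hcviol c V X
end

section
/- Slack-free deliverability at all vertices implies slack-free deliverability over the whole polyhedral uncertainty set: let V ⊆ ℝ^N be a finite nonempty set and x ∈ ℝ^d. If for every vertex v ∈ V there exists p_v ∈ ℝ^g with H x + D p_v ≤ E v + h componentwise, then for every ξ ∈ convexHull ℝ V there exists p ∈ ℝ^g with H x + D p ≤ E ξ + h componentwise. -/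
open Matrix

/-- Slack-free deliverability at all vertices implies slack-free deliverability
over the whole polyhedral uncertainty set: if for every vertex `v ∈ V` there is
a recourse dispatch `p_v` with `H x + D p_v ≤ E v + h`, then for every
`ξ ∈ convexHull ℝ V` there is a recourse dispatch `p` with `H x + D p ≤ E ξ + h`. -/
theorem slack_free_on_vertices_implies_on_hull
    {d g m N : ℕ}
    (H : Matrix (Fin m) (Fin d) ℝ) (D : Matrix (Fin m) (Fin g) ℝ)
    (E : Matrix (Fin m) (Fin N) ℝ) (h : Fin m → ℝ)
    (V : Set (Fin N → ℝ)) (hVfin : V.Finite) (hVne : V.Nonempty)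
    (x : Fin d → ℝ)
    (hvert : ∀ v ∈ V, ∃ p : Fin g → ℝ,
      ∀ i, (H.mulVec x + D.mulVec p) i ≤ (E.mulVec v + h) i) :
    ∀ ξ ∈ convexHull ℝ V, ∃ p : Fin g → ℝ,
      ∀ i, (H.mulVec x + D.mulVec p) i ≤ (E.mulVec ξ + h) i := by
  have key : convexHull ℝ V ⊆ {ξ : Fin N → ℝ | ∃ p : Fin g → ℝ,
      ∀ i, (H.mulVec x + D.mulVec p) i ≤ (E.mulVec ξ + h) i} := by
    apply convexHull_min
    · intro v hv; exact hvert v hv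
    · rintro ξ1 ⟨p1, h1⟩ ξ2 ⟨p2, h2⟩ a b ha hb hab
      refine ⟨a • p1 + b • p2, fun i => ?_⟩
      have e1 := h1 i
      have e2 := h2 i
      simp only [Pi.add_apply, mulVec_add, mulVec_smul, Pi.smul_apply,
        smul_eq_mul] at *
      have e1' := mul_le_mul_of_nonneg_left e1 ha
      have e2' := mul_le_mul_of_nonneg_left e2 hb
      have hH : a * (H *ᵥ x) i + b * (H *ᵥ x) i = (H *ᵥ x) i := by
        rw [← add_mul, hab, one_mul]
      have hh : a * h i + b * h i = h i := by rw [← add_mul, hab, one_mul]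
      ring_nf at e1' e2' ⊢
      nlinarith [e1', e2', hH, hh]
  intro ξ hξ
  exact key hξ
end
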